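/- Let n > 4, let A be a diminishable pair-set in Q_n, let i ∈ [n], and assume that if |A| = n then i is separating for A. Then there are at most two distinct vertices γ of Q_n satisfying ρ_{i=γ(i)}(γ) ∈ enc(ρ_{i=γ(i)}(∪A)); moreover, if γ and γ' are two distinct such vertices, then |A| ≥ n-1 and χ(γ) ≠ χ(γ'). -/

import Mathlib

open SimpleGraph Finset

attribute [local instance 10] Classical.propDecidable

/-- Vertices of the `n`-dimensional hypercube: 0-1 vectors of length `n`. -/
abbrev Vtx (n : ℕ) : Type := Fin n → Bool

/-- The hypercube graph `Q_n`: two vectors are adjacent iff they differ in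
exactly one coordinate, i.e. their Hamming distance is `1`. -/
def cube (n : ℕ) : SimpleGraph (Vtx n) where
  Adj α β := hammingDist α β = 1
  symm := by
    constructor
    intro α β h
    change hammingDist α β = 1 at h
    change hammingDist β α = 1
    rwa [hammingDist_comm]
  loopless := by
    constructor
    intro α h
    simp [hammingDist_self] at h

/-- The parity `χ(α) = (-1)^(sum of coordinates of α)`. -/
def chi {n : ℕ} (α : Vtx n) : ℤ := ∏ i, if α i then (-1 : ℤ) else 1

/-- `χ(α) + χ(β)` for an unordered pair `{α, β}`. -/
def pairChi {n : ℕ} : Sym2 (Vtx n) → ℤ :=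
  Sym2.lift ⟨fun α β => chi α + chi β, fun _ _ => add_comm _ _⟩

/-- `∪A` : the set of all vertices occurring in pairs of `A`. -/
def suppA {n : ℕ} (A : Finset (Sym2 (Vtx n))) : Set (Vtx n) :=
  {v | ∃ p ∈ A, v ∈ p}

/-- A pair-set: distinct pairs are disjoint (as vertex sets), and a nonempty
pair-set contains a non-degenerated pair. -/
def IsPairSet {n : ℕ} (A : Finset (Sym2 (Vtx n))) : Prop :=
  (∀ p ∈ A, ∀ q ∈ A, p ≠ q → ∀ v : Vtx n, v ∈ p → v ∉ q) ∧
  (A.Nonempty → ∃ p ∈ A, ¬ p.IsDiag)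

/-- An odd pair: its two vertices have different parities. -/
def OddPair {n : ℕ} (p : Sym2 (Vtx n)) : Prop :=
  ∃ α β : Vtx n, p = s(α, β) ∧ chi α ≠ chi β

/-- An odd pair-set: every pair is odd. -/
def OddPairSet {n : ℕ} (A : Finset (Sym2 (Vtx n))) : Prop :=
  ∀ p ∈ A, OddPair p

/-- A balanced pair-set: the parities sum up to `0`. -/
def BalancedPS {n : ℕ} (A : Finset (Sym2 (Vtx n))) : Prop :=
  ∑ p ∈ A, pairChi p = 0

/-- An edge-pair: its two vertices differ in exactly one coordinate. -/
def IsEdgePair {n : ℕ} (p : Sym2 (Vtx n)) : Prop :=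
  ∃ α β : Vtx n, p = s(α, β) ∧ hammingDist α β = 1

/-- `enco X` : vertices all of whose neighbours lie in `X`. -/
def enco {n : ℕ} (X : Set (Vtx n)) : Set (Vtx n) :=
  {γ | ∀ δ : Vtx n, (cube n).Adj γ δ → δ ∈ X}

/-- `enc X = enco X \ X` for a vertex set `X`. -/
def encSet {n : ℕ} (X : Set (Vtx n)) : Set (Vtx n) := enco X \ X

/-- `enc A = enco (∪A) \ ∪A` for a pair-set `A`. -/
def encA {n : ℕ} (A : Finset (Sym2 (Vtx n))) : Set (Vtx n) :=
  enco (suppA A) \ suppA A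

/-- A pair-set `A` is connectable if there is a family of paths in `Q_n`, one
path joining the two vertices of each pair of `A`, such that every vertex of
`Q_n` lies on exactly one of these paths. -/
def Connectable {n : ℕ} (A : Finset (Sym2 (Vtx n))) : Prop :=
  ∃ (src tgt : Sym2 (Vtx n) → Vtx n)
    (path : (p : Sym2 (Vtx n)) → (cube n).Walk (src p) (tgt p)),
    (∀ p ∈ A, p = s(src p, tgt p)) ∧
    (∀ p ∈ A, (path p).IsPath) ∧
    (∀ v : Vtx n, ∃! p : Sym2 (Vtx n), p ∈ A ∧ v ∈ (path p).support)

/-- `A` contains at least two edge-pairs. -/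
def TwoEdgePairs {n : ℕ} (A : Finset (Sym2 (Vtx n))) : Prop :=
  ∃ p ∈ A, ∃ q ∈ A, p ≠ q ∧ IsEdgePair p ∧ IsEdgePair q

/-- A diminishable pair-set. -/
def Diminishable {n : ℕ} (A : Finset (Sym2 (Vtx n))) : Prop :=
  IsPairSet A ∧ OddPairSet A ∧
  ((A.card ≤ n - 1 ∧
      (n = 4 →
        (∃ p ∈ A, IsEdgePair p) ∨
          ¬∃ X : Set (Vtx n), suppA A ⊆ X ∧
            Nonempty ((cube n).induce X ≃g cube 3))) ∨
    (A.card = n ∧ n ≠ 4 ∧ TwoEdgePairs A ∧ encA A = ∅))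

/-- The coordinate `i` is separating for `A`. -/
def Separating {n : ℕ} (i : Fin n) (A : Finset (Sym2 (Vtx n))) : Prop :=
  ∃ α β α' β' : Vtx n, s(α, β) ∈ A ∧ s(α', β') ∈ A ∧
    hammingDist α β = 1 ∧ hammingDist α' β' = 1 ∧
    α i = β i ∧ α' i = β' i ∧ α i ≠ α' i

/-- The relation `A ⇒ B`. -/
def StepRel {n : ℕ} (A B : Finset (Sym2 (Vtx n))) : Prop :=
  ∃ (α β α' β' : Vtx n) (i : Fin n),
    s(α, β) ∈ A ∧ s(α', β') ∈ A ∧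
    β' = Function.update β i (!(β i)) ∧
    B = A \ {s(α, β), s(α', β')} ∪ {s(α, α')}

/-- Isomorphism of pair-sets, induced by an automorphism of the hypercube. -/
def Isomorphic {n : ℕ} (A B : Finset (Sym2 (Vtx n))) : Prop :=
  ∃ f : cube n ≃g cube n, B = A.image (Sym2.map f)

/-- `ρ_{i=k}` applied to a pair-set: keep the pairs with both `i`-th
coordinates equal to `k` and delete the `i`-th coordinate. -/
def rhoPairs {m : ℕ} (i : Fin (m + 1)) (k : Bool) (B : Finset (Sym2 (Vtx (m + 1)))) :
    Finset (Sym2 (Vtx m)) :=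
  (B.filter fun p => ∀ v ∈ p, v i = k).image (Sym2.map (Fin.removeNth i))

/-- `ρ_{i=k}` applied to a vertex set. -/
def rhoSet {m : ℕ} (i : Fin (m + 1)) (k : Bool) (X : Set (Vtx (m + 1))) : Set (Vtx m) :=
  {γ | ∃ α ∈ X, α i = k ∧ γ = Fin.removeNth i α}

/-- `ι_{i,k}(A, B)`. -/
def iotaPairs {m : ℕ} (i : Fin (m + 1)) (k : Bool) (A B : Finset (Sym2 (Vtx m))) :
    Finset (Sym2 (Vtx (m + 1))) :=
  A.image (Sym2.map (i.insertNth k)) ∪ B.image (Sym2.map (i.insertNth (!k)))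

/-
If `ρ_{i=γ(i)}(γ)` is encompassed, then all `n - 1` neighbours of `γ` obtained by
flipping a coordinate `j ≠ i` lie in `∪A`, and they all have parity `-χ(γ)`. An odd pair contains
one vertex of each parity, so `∪A` has at most `|A| ≤ n` vertices of a given parity; this already
gives `|A| ≥ n - 1`. Two distinct such vertices `γ, γ'` of equal parity would have at most two
common neighbours, so `∪A` would contain at least `2(n - 1) - 2 > n` vertices of parity `-χ(γ)`
once `n > 4`. Hence distinct such vertices have distinct parities, and there are at most two.
-/

section

variable {n : ℕ}

lemma chi_eq_one_or_eq_neg_one (α : Vtx n) : chi α = 1 ∨ chi α = -1 :=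
  Finset.prod_induction _ (fun x => x = 1 ∨ x = -1)
    (by rintro a b (rfl | rfl) (rfl | rfl) <;> simp) (by simp)
    (fun j _ => by cases α j <;> simp)

lemma encard_le_two_of_injOn_chi {S : Set (Vtx n)} (h : S.InjOn chi) :
    S.encard ≤ 2 :=
  calc S.encard = (chi '' S).encard := h.encard_image.symm
    _ ≤ ({1, -1} : Set ℤ).encard :=
      Set.encard_le_encard <| by
        rintro _ ⟨γ, -, rfl⟩
        rcases chi_eq_one_or_eq_neg_one γ with h | h <;> simp [h]
    _ = 2 := Set.encard_pair (by norm_num)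

lemma OddPair.eq_of_chi_eq {p : Sym2 (Vtx n)} (hp : OddPair p) {v w : Vtx n}
    (hv : v ∈ p) (hw : w ∈ p) (h : chi v = chi w) : v = w := by
  obtain ⟨α, β, rfl, hαβ⟩ := hp
  rw [Sym2.mem_iff] at hv hw
  rcases hv with rfl | rfl <;> rcases hw with rfl | rfl
  exacts [rfl, absurd h hαβ, absurd h.symm hαβ, rfl]

lemma OddPairSet.card_le {A : Finset (Sym2 (Vtx n))} (hA : OddPairSet A)
    {S : Finset (Vtx n)} {ε : ℤ} (hS : ∀ v ∈ S, v ∈ suppA A ∧ chi v = ε) : S.card ≤ A.card := by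
  have hsub : S ⊆ A.biUnion fun p => S.filter (· ∈ p) := by
    intro v hv
    obtain ⟨p, hp, hvp⟩ := (hS v hv).1
    exact Finset.mem_biUnion.mpr ⟨p, hp, Finset.mem_filter.mpr ⟨hv, hvp⟩⟩
  have hle_one : ∀ p ∈ A, (S.filter (· ∈ p)).card ≤ 1 := by
    refine fun p hp => Finset.card_le_one.mpr fun v hv w hw => ?_
    rw [Finset.mem_filter] at hv hw
    exact (hA p hp).eq_of_chi_eq hv.2 hw.2 ((hS v hv.1).2.trans (hS w hw.1).2.symm)
  simpa using (Finset.card_le_card hsub).trans (Finset.card_biUnion_le_card_mul _ _ 1 hle_one)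

lemma Diminishable.card_le {A : Finset (Sym2 (Vtx n))} (hA : Diminishable A) :
    A.card ≤ n := by
  rcases hA.2.2 with ⟨h, -⟩ | ⟨h, -⟩ <;> omega

def flipAt (γ : Vtx n) (j : Fin n) : Vtx n := Function.update γ j (!γ j)

@[simp] lemma flipAt_apply_self (γ : Vtx n) (j : Fin n) : flipAt γ j j = !γ j :=
  Function.update_self ..

lemma flipAt_apply_of_ne (γ : Vtx n) {j l : Fin n} (h : l ≠ j) : flipAt γ j l = γ l :=
  Function.update_of_ne h ..

lemma chi_flipAt (γ : Vtx n) (j : Fin n) : chi (flipAt γ j) = -chi γ := by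
  unfold chi
  rw [← Finset.mul_prod_erase _ _ (Finset.mem_univ j),
    ← Finset.mul_prod_erase _ (fun k => if γ k then (-1 : ℤ) else 1) (Finset.mem_univ j),
    Finset.prod_congr rfl fun k hk => by rw [flipAt_apply_of_ne γ (Finset.ne_of_mem_erase hk)],
    flipAt_apply_self]
  cases γ j <;> simp

lemma cube_adj_flipAt (γ : Vtx n) (j : Fin n) : (cube n).Adj γ (flipAt γ j) := by
  change (Finset.univ.filter fun k => γ k ≠ flipAt γ j k).card = 1
  rw [Finset.card_eq_one]
  refine ⟨j, Finset.ext fun k => ?_⟩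
  by_cases hk : k = j
  · subst hk; simp
  · simp [hk, flipAt_apply_of_ne γ hk]

lemma flipAt_injective (γ : Vtx n) : Function.Injective (flipAt γ) := by
  intro j j' h
  by_contra hne
  have := congrFun h j
  rw [flipAt_apply_self, flipAt_apply_of_ne γ hne] at this
  exact Bool.not_ne_self _ this

lemma apply_eq_of_flipAt_eq {γ γ' : Vtx n} {j j' l : Fin n} (h : flipAt γ j = flipAt γ' j')
    (hj : l ≠ j) (hj' : l ≠ j') : γ l = γ' l := by
  simpa [flipAt_apply_of_ne _ hj, flipAt_apply_of_ne _ hj'] using congrFun h l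

lemma apply_ne_of_flipAt_eq {γ γ' : Vtx n} (hne : γ ≠ γ') {j j' : Fin n}
    (h : flipAt γ j = flipAt γ' j') : γ j ≠ γ' j := by
  have hjj' : j ≠ j' := by
    rintro rfl
    refine hne (funext fun l => ?_)
    by_cases hl : l = j
    · subst hl; simpa using congrFun h l
    · exact apply_eq_of_flipAt_eq h hl hl
  have := congrFun h j
  rw [flipAt_apply_self, flipAt_apply_of_ne _ hjj'] at this
  rw [← this]
  exact (Bool.not_ne_self _).symm

/-- Two distinct vertices of the hypercube have at most two common neighbours. -/
lemma card_image_flipAt_inter_le_two {γ γ' : Vtx n} (hne : γ ≠ γ') (J : Finset (Fin n)) :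
    (J.image (flipAt γ) ∩ J.image (flipAt γ')).card ≤ 2 := by
  rcases (J.image (flipAt γ) ∩ J.image (flipAt γ')).eq_empty_or_nonempty with hE | ⟨_, hv₀⟩
  · simp [hE]
  simp only [Finset.mem_inter, Finset.mem_image] at hv₀
  obtain ⟨⟨j₀, -, rfl⟩, j₀', -, h₀⟩ := hv₀
  refine (Finset.card_le_card fun v hv => ?_).trans
    (Finset.card_le_two (a := flipAt γ j₀) (b := flipAt γ j₀'))
  simp only [Finset.mem_inter, Finset.mem_image] at hv
  obtain ⟨⟨j, -, rfl⟩, j', -, h⟩ := hv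
  -- `γ` and `γ'` differ only at `j₀` and `j₀'`, and a common neighbour flips a coordinate
  -- where they differ
  have : j = j₀ ∨ j = j₀' := by
    by_contra! hj
    exact apply_ne_of_flipAt_eq hne h.symm (apply_eq_of_flipAt_eq h₀.symm hj.1 hj.2)
  rcases this with rfl | rfl <;> simp

lemma card_le_of_flipAt_mem_suppA {A : Finset (Sym2 (Vtx n))} (hA : OddPairSet A) {γ : Vtx n}
    {J : Finset (Fin n)} (hJ : ∀ j ∈ J, flipAt γ j ∈ suppA A) : J.card ≤ A.card := by
  rw [← Finset.card_image_of_injective J (flipAt_injective γ)]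
  refine hA.card_le (ε := -chi γ) ?_
  simp only [Finset.mem_image]
  rintro _ ⟨j, hj, rfl⟩
  exact ⟨hJ j hj, chi_flipAt γ j⟩

lemma two_mul_card_le_of_flipAt_mem_suppA {A : Finset (Sym2 (Vtx n))} (hA : OddPairSet A)
    {γ γ' : Vtx n} (hne : γ ≠ γ') (hχ : chi γ = chi γ') {J : Finset (Fin n)}
    (hJ : ∀ j ∈ J, flipAt γ j ∈ suppA A) (hJ' : ∀ j ∈ J, flipAt γ' j ∈ suppA A) :
    2 * J.card ≤ A.card + 2 := by
  have hunion : (J.image (flipAt γ) ∪ J.image (flipAt γ')).card ≤ A.card := by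
    refine hA.card_le (ε := -chi γ) ?_
    simp only [Finset.mem_union, Finset.mem_image]
    rintro _ (⟨j, hj, rfl⟩ | ⟨j, hj, rfl⟩)
    · exact ⟨hJ j hj, chi_flipAt γ j⟩
    · exact ⟨hJ' j hj, hχ ▸ chi_flipAt γ' j⟩
  have := Finset.card_union_add_card_inter (J.image (flipAt γ)) (J.image (flipAt γ'))
  rw [Finset.card_image_of_injective J (flipAt_injective γ),
    Finset.card_image_of_injective J (flipAt_injective γ')] at this
  have := card_image_flipAt_inter_le_two hne J
  omega

end

lemma removeNth_flipAt_succAbove {m : ℕ} (i : Fin (m + 1)) (γ : Vtx (m + 1)) (l : Fin m) :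
    Fin.removeNth i (flipAt γ (i.succAbove l)) = flipAt (Fin.removeNth i γ) l :=
  Function.update_comp_eq_of_injective γ Fin.succAbove_right_injective l _

lemma flipAt_mem_of_removeNth_mem_enco {m : ℕ} {X : Set (Vtx (m + 1))} {i j : Fin (m + 1)}
    {γ : Vtx (m + 1)} (hγ : Fin.removeNth i γ ∈ enco (rhoSet i (γ i) X)) (hj : j ≠ i) :
    flipAt γ j ∈ X := by
  obtain ⟨l, rfl⟩ := Fin.exists_succAbove_eq hj
  obtain ⟨α, hαX, hαi, hα⟩ := hγ _ (cube_adj_flipAt _ l)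
  rw [← removeNth_flipAt_succAbove] at hα
  have hflip_i : flipAt γ (i.succAbove l) i = γ i :=
    flipAt_apply_of_ne γ (Fin.succAbove_ne i l).symm
  rwa [← Fin.insertNth_self_removeNth i (flipAt γ _), hflip_i, hα, ← hαi,
    Fin.insertNth_self_removeNth]

theorem stmt14_general (m : ℕ) (hm : 4 ≤ m)
    (A : Finset (Sym2 (Vtx (m + 1)))) (i : Fin (m + 1))
    (hdim : Diminishable A) :
    {γ : Vtx (m + 1) |
        Fin.removeNth i γ ∈ encSet (rhoSet i (γ i) (suppA A))}.encard ≤ 2 ∧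
    ∀ γ γ' : Vtx (m + 1),
      Fin.removeNth i γ ∈ encSet (rhoSet i (γ i) (suppA A)) →
      Fin.removeNth i γ' ∈ encSet (rhoSet i (γ' i) (suppA A)) →
      γ ≠ γ' → m ≤ A.card ∧ chi γ ≠ chi γ' := by
  have hodd : OddPairSet A := hdim.2.1
  have hflips : ∀ γ : Vtx (m + 1), Fin.removeNth i γ ∈ encSet (rhoSet i (γ i) (suppA A)) →
      ∀ j ∈ Finset.univ.erase i, flipAt γ j ∈ suppA A :=
    fun γ hγ j hj => flipAt_mem_of_removeNth_mem_enco hγ.1 (Finset.ne_of_mem_erase hj)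
  have hJ : (Finset.univ.erase i).card = m := by simp
  have hchi : ∀ γ γ' : Vtx (m + 1), Fin.removeNth i γ ∈ encSet (rhoSet i (γ i) (suppA A)) →
      Fin.removeNth i γ' ∈ encSet (rhoSet i (γ' i) (suppA A)) → γ ≠ γ' → chi γ ≠ chi γ' := by
    intro γ γ' hγ hγ' hne hχ
    have := two_mul_card_le_of_flipAt_mem_suppA hodd hne hχ (hflips γ hγ) (hflips γ' hγ')
    have := hdim.card_le
    omega
  refine ⟨encard_le_two_of_injOn_chi fun γ hγ γ' hγ' hχ => ?_,
    fun γ γ' hγ hγ' hne => ⟨?_, hchi γ γ' hγ hγ' hne⟩⟩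
  · by_contra hne
    exact hchi γ γ' hγ hγ' hne hχ
  · simpa [hJ] using card_le_of_flipAt_mem_suppA hodd (hflips γ hγ)

/-- Let `n = m + 1 > 4`, let `A` be a diminishable pair-set
in `Q_n`, let `i ∈ [n]`, and assume `i` is separating for `A` whenever
`|A| = n`. Then there are at most two vertices `γ` with
`ρ_{i=γ(i)}(γ) ∈ enc(ρ_{i=γ(i)}(∪A))`; and if `γ ≠ γ'` are two such vertices
then `|A| ≥ n - 1` and `χ(γ) ≠ χ(γ')`. -/
theorem stmt14 (m : ℕ) (hm : 4 ≤ m)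
    (A : Finset (Sym2 (Vtx (m + 1)))) (i : Fin (m + 1))
    (hdim : Diminishable A)
    (hsep : A.card = m + 1 → Separating i A) :
    {γ : Vtx (m + 1) |
        Fin.removeNth i γ ∈ encSet (rhoSet i (γ i) (suppA A))}.encard ≤ 2 ∧
    ∀ γ γ' : Vtx (m + 1),
      Fin.removeNth i γ ∈ encSet (rhoSet i (γ i) (suppA A)) →
      Fin.removeNth i γ' ∈ encSet (rhoSet i (γ' i) (suppA A)) →
      γ ≠ γ' → m ≤ A.card ∧ chi γ ≠ chi γ' :=
  stmt14_general m hm A i hdim
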